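/- arXiv:1304.1823 — 4 statements merged into one kernel-verified Lean document; each statement's English description precedes it below -/
import Mathlib

section
/- Let n ≥ 1 be an integer, let p ≥ 1, let 0 < s < p, set κ = 1/s − 1/p, let α be real with αp > −n and (α−1)p > −n, and set σ = (α−1) − κn. Let C_H > 0 be a constant such that for every v ∈ C_c^∞(ℝⁿ), (∫_{ℝⁿ} ‖x‖^{(α−1)p} |v(x)|^p dx)^{1/p} ≤ C_H (∫_{ℝⁿ} ‖x‖^{αp} ‖∇v(x)‖^p dx)^{1/p}. Then for all real numbers 0 < r₀ < R and every u ∈ C_c^∞(ℝⁿ) whose support is contained in the annulus {x ∈ ℝⁿ : r₀ ≤ ‖x‖ ≤ R}, one has (∫_{ℝⁿ} ‖x‖^{σs} |u(x)|^s dx)^{1/s} ≤ C_H · (ω_{n−1} ln(R/r₀))^{κ} · (∫_{ℝⁿ} ‖x‖^{αp} ‖∇u(x)‖^p dx)^{1/p}, where ω_{n−1} denotes the (n−1)-dimensional surface measure of the unit sphere in ℝⁿ. -/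
open MeasureTheory Real Set

lemma annulus_int (n : ℕ) (hn : 1 ≤ n) (r₀ R : ℝ) (hr₀ : 0 < r₀) (hrR : r₀ < R) :
    ∫ x : EuclideanSpace ℝ (Fin n) in {x | r₀ ≤ ‖x‖ ∧ ‖x‖ ≤ R}, ‖x‖ ^ (-(n : ℝ)) =
      2 * Real.pi ^ ((n : ℝ) / 2) / Real.Gamma ((n : ℝ) / 2) * Real.log (R / r₀) := by
  haveI : Nonempty (Fin n) := Fin.pos_iff_nonempty.mp hn
  set A : Set (EuclideanSpace ℝ (Fin n)) := {x | r₀ ≤ ‖x‖ ∧ ‖x‖ ≤ R}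
  have hAmeas : MeasurableSet A :=
    measurableSet_Icc.preimage measurable_norm
  have h1 : ∫ x : EuclideanSpace ℝ (Fin n) in A, ‖x‖ ^ (-(n : ℝ)) =
      ∫ x : EuclideanSpace ℝ (Fin n),
        Set.indicator (Set.Icc r₀ R) (fun y => y ^ (-(n : ℝ))) ‖x‖ := by
    rw [← integral_indicator hAmeas]
    congr 1
  rw [h1, integral_fun_norm_addHaar volume (Set.indicator (Set.Icc r₀ R) (fun y => y ^ (-(n : ℝ))))]
  have hdim : Module.finrank ℝ (EuclideanSpace ℝ (Fin n)) = n := finrank_euclideanSpace_fin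
  rw [hdim]
  have h2 : ∫ y in Ioi (0:ℝ), y ^ (n - 1) • Set.indicator (Set.Icc r₀ R)
      (fun y => y ^ (-(n : ℝ))) y = Real.log (R / r₀) := by
    have : ∀ y : ℝ, y ^ (n - 1) • Set.indicator (Set.Icc r₀ R) (fun y => y ^ (-(n : ℝ))) y
        = Set.indicator (Set.Icc r₀ R) (fun y => y ^ (n - 1) * y ^ (-(n : ℝ))) y := by
      intro y
      rw [smul_eq_mul, Set.indicator_mul_right]
    simp_rw [this]
    have hsub : Set.Icc r₀ R ⊆ Set.Ioi (0:ℝ) := fun y hy => lt_of_lt_of_le hr₀ hy.1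
    rw [integral_indicator measurableSet_Icc, Measure.restrict_restrict measurableSet_Icc,
      Set.inter_eq_self_of_subset_left hsub]
    have h3 : ∀ y ∈ Set.Icc r₀ R, y ^ (n - 1) * y ^ (-(n : ℝ)) = y⁻¹ := by
      intro y hy
      have hy0 : 0 < y := lt_of_lt_of_le hr₀ hy.1
      rw [← Real.rpow_natCast y (n - 1), ← Real.rpow_add hy0, ← Real.rpow_neg_one y]
      congr 1
      rw [Nat.cast_sub hn]
      push_cast; ring
    rw [setIntegral_congr_fun measurableSet_Icc h3, integral_Icc_eq_integral_Ioc,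
      ← intervalIntegral.integral_of_le hrR.le, integral_inv_of_pos hr₀ (hr₀.trans hrR)]
  rw [h2]
  have hball : (volume (Metric.ball (0 : EuclideanSpace ℝ (Fin n)) 1)).toReal =
      Real.sqrt Real.pi ^ n / Real.Gamma (n / 2 + 1) := by
    rw [EuclideanSpace.volume_ball, Fintype.card_fin]
    simp [ENNReal.toReal_ofReal (by positivity : (0:ℝ) ≤ Real.sqrt Real.pi ^ n / Real.Gamma (n / 2 + 1))]
  rw [measureReal_def, hball]
  have hsqrt : Real.sqrt Real.pi ^ n = Real.pi ^ ((n : ℝ) / 2) := by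
    rw [Real.sqrt_eq_rpow, ← Real.rpow_natCast (Real.pi ^ ((1:ℝ)/2)) n,
      ← Real.rpow_mul Real.pi_pos.le]
    congr 1; ring
  have hn2 : (0:ℝ) < (n : ℝ) / 2 := by positivity
  have hGamma : Real.Gamma ((n : ℝ) / 2 + 1) = ((n:ℝ) / 2) * Real.Gamma ((n:ℝ) / 2) :=
    Real.Gamma_add_one hn2.ne'
  have hGpos : 0 < Real.Gamma ((n : ℝ) / 2) := Real.Gamma_pos_of_pos hn2
  rw [hsqrt, hGamma]
  simp only [smul_eq_mul, nsmul_eq_mul]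
  field_simp

/-- The case `0 < s < p` of the simplified Caffarelli–Kohn–Nirenberg inequality,
for functions supported in the annulus `{x : r₀ ≤ ‖x‖ ≤ R}`; the constant involves
`ω_{n-1} = 2 π^(n/2) / Γ(n/2)`, the surface measure of the unit sphere in ℝⁿ
(so that `∫_{r₀ ≤ ‖x‖ ≤ R} ‖x‖^(-n) dx = ω_{n-1} ln (R/r₀)`). -/
theorem ckn_small_s_annulus (n : ℕ) (hn : 1 ≤ n) (p s κ α σ : ℝ)
    (hp : 1 ≤ p) (hs0 : 0 < s) (hsp : s < p) (hκ : κ = 1 / s - 1 / p)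
    (hαp : -(n : ℝ) < α * p) (hα1p : -(n : ℝ) < (α - 1) * p)
    (hσ : σ = (α - 1) - κ * n)
    (C_H : ℝ) (hCH : 0 < C_H)
    (hHardy : ∀ v : EuclideanSpace ℝ (Fin n) → ℝ,
      ContDiff ℝ (⊤ : ℕ∞) v → HasCompactSupport v →
      (∫ x, ‖x‖ ^ ((α - 1) * p) * |v x| ^ p) ^ (1 / p) ≤
        C_H * (∫ x, ‖x‖ ^ (α * p) * ‖fderiv ℝ v x‖ ^ p) ^ (1 / p)) :
    ∀ r₀ R : ℝ, 0 < r₀ → r₀ < R →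
      ∀ u : EuclideanSpace ℝ (Fin n) → ℝ,
        ContDiff ℝ (⊤ : ℕ∞) u → HasCompactSupport u →
        tsupport u ⊆ {x : EuclideanSpace ℝ (Fin n) | r₀ ≤ ‖x‖ ∧ ‖x‖ ≤ R} →
        (∫ x, ‖x‖ ^ (σ * s) * |u x| ^ s) ^ (1 / s) ≤
          C_H * (2 * Real.pi ^ ((n : ℝ) / 2) / Real.Gamma ((n : ℝ) / 2) *
              Real.log (R / r₀)) ^ κ *
            (∫ x, ‖x‖ ^ (α * p) * ‖fderiv ℝ u x‖ ^ p) ^ (1 / p) := by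
  intro r₀ R hr₀ hrR u hu hcu hsupp
  haveI : Nonempty (Fin n) := Fin.pos_iff_nonempty.mp hn
  have hp0 : (0:ℝ) < p := lt_of_lt_of_le one_pos hp
  have hps : (0:ℝ) < p - s := sub_pos.mpr hsp
  have hsne : s ≠ 0 := hs0.ne'
  have hpne : p ≠ 0 := hp0.ne'
  have hpsne : p - s ≠ 0 := hps.ne'
  set A : Set (EuclideanSpace ℝ (Fin n)) := {x | r₀ ≤ ‖x‖ ∧ ‖x‖ ≤ R} with hA
  have hAmeas : MeasurableSet A := measurableSet_Icc.preimage measurable_norm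
  have hApos : ∀ x ∈ A, (0:ℝ) < ‖x‖ := fun x hx => lt_of_lt_of_le hr₀ hx.1
  have hu0 : ∀ x ∉ A, u x = 0 := fun x hx =>
    image_eq_zero_of_notMem_tsupport (fun h => hx (hsupp h))
  have hAcomp : IsCompact A := by
    refine Metric.isCompact_of_isClosed_isBounded (isClosed_Icc.preimage continuous_norm) ?_
    exact Metric.isBounded_closedBall.subset (fun x hx => mem_closedBall_zero_iff.mpr hx.2)
  haveI : IsFiniteMeasure (volume.restrict A) :=
    ⟨by rw [Measure.restrict_apply_univ]; exact hAcomp.measure_lt_top⟩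
  set f : EuclideanSpace ℝ (Fin n) → ℝ := fun x => ‖x‖ ^ ((α - 1) * s) * |u x| ^ s with hf
  set g : EuclideanSpace ℝ (Fin n) → ℝ := fun x => ‖x‖ ^ (-(κ * n * s)) with hg
  have hfnn : ∀ x, 0 ≤ f x := fun x =>
    mul_nonneg (Real.rpow_nonneg (norm_nonneg x) _) (Real.rpow_nonneg (abs_nonneg _) _)
  have hgnn : ∀ x, 0 ≤ g x := fun x => Real.rpow_nonneg (norm_nonneg x) _
  -- continuity on A
  have hnormc : ∀ c : ℝ, ContinuousOn (fun x : EuclideanSpace ℝ (Fin n) => ‖x‖ ^ c) A := by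
    intro c x hx
    exact ((Real.continuousAt_rpow_const _ _ (Or.inl (hApos x hx).ne')).comp
      continuous_norm.continuousAt).continuousWithinAt
  have hfc : ContinuousOn f A :=
    (hnormc _).mul ((hu.continuous.abs.continuousOn).rpow_const (fun x _ => Or.inr hs0.le))
  have hgc : ContinuousOn g A := hnormc _
  -- Memℒp
  have hmem : ∀ (h : EuclideanSpace ℝ (Fin n) → ℝ), ContinuousOn h A →
      ∀ q : ENNReal, MemLp h q (volume.restrict A) := by
    intro h hc q
    obtain ⟨C, hC⟩ := hAcomp.exists_bound_of_continuousOn hc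
    exact (memLp_top_of_bound (hc.aestronglyMeasurable hAmeas) C
      ((ae_restrict_iff' hAmeas).2 (ae_of_all _ hC))).mono_exponent le_top
  have hpq : Real.HolderConjugate (p / s) (p / (p - s)) := by
    rw [Real.holderConjugate_iff]
    constructor
    · exact (one_lt_div hs0).2 hsp
    · field_simp
      ring
  have holder := integral_mul_le_Lp_mul_Lq_of_nonneg hpq
    (ae_of_all _ hfnn) (ae_of_all _ hgnn)
    (hmem f hfc _) (hmem g hgc _)
  -- e1
  have e1 : ∫ x, ‖x‖ ^ (σ * s) * |u x| ^ s = ∫ x in A, f x * g x := by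
    rw [← setIntegral_eq_integral_of_forall_compl_eq_zero
      (fun x hx => by simp [hu0 x hx, Real.zero_rpow hsne])]
    refine setIntegral_congr_fun hAmeas (fun x hx => ?_)
    have hσs : σ * s = (α - 1) * s + -(κ * n * s) := by rw [hσ]; ring
    rw [hσs, Real.rpow_add (hApos x hx)]
    simp only [hf, hg]
    ring
  -- e2
  have e2 : ∫ x in A, f x ^ (p / s) = ∫ x, ‖x‖ ^ ((α - 1) * p) * |u x| ^ p := by
    conv_rhs => rw [← setIntegral_eq_integral_of_forall_compl_eq_zero
      (s := A) (fun x hx => by simp [hf, hu0 x hx, Real.zero_rpow hsne,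
        Real.zero_rpow (div_ne_zero hpne hsne), Real.zero_rpow hpne])]
    refine setIntegral_congr_fun hAmeas (fun x hx => ?_)
    simp only [hf]
    rw [Real.mul_rpow (Real.rpow_nonneg (norm_nonneg x) _) (Real.rpow_nonneg (abs_nonneg _) _),
      ← Real.rpow_mul (norm_nonneg x), ← Real.rpow_mul (abs_nonneg _)]
    have h1 : (α - 1) * s * (p / s) = (α - 1) * p := by field_simp
    have h2 : s * (p / s) = p := by field_simp
    rw [h1, h2]
  -- e3
  have e3 : ∫ x in A, g x ^ (p / (p - s)) = ∫ x in A, ‖x‖ ^ (-(n : ℝ)) := by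
    refine setIntegral_congr_fun hAmeas (fun x hx => ?_)
    simp only [hg]
    rw [← Real.rpow_mul (norm_nonneg x)]
    congr 1
    rw [hκ]
    field_simp
  have e4 : ∫ x in A, ‖x‖ ^ (-(n : ℝ)) =
      2 * Real.pi ^ ((n : ℝ) / 2) / Real.Gamma ((n : ℝ) / 2) * Real.log (R / r₀) :=
    annulus_int n hn r₀ R hr₀ hrR
  set X := ∫ x, ‖x‖ ^ ((α - 1) * p) * |u x| ^ p with hX
  set Y := ∫ x, ‖x‖ ^ (α * p) * ‖fderiv ℝ u x‖ ^ p with hY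
  set W := 2 * Real.pi ^ ((n : ℝ) / 2) / Real.Gamma ((n : ℝ) / 2) * Real.log (R / r₀) with hW
  have hX0 : 0 ≤ X := integral_nonneg (fun x =>
    mul_nonneg (Real.rpow_nonneg (norm_nonneg x) _) (Real.rpow_nonneg (abs_nonneg _) _))
  have hGpos : 0 < Real.Gamma ((n : ℝ) / 2) := Real.Gamma_pos_of_pos (by positivity)
  have hW0 : 0 ≤ W := by
    apply mul_nonneg
    · positivity
    · exact Real.log_nonneg ((one_le_div hr₀).2 hrR.le)
  have key : (∫ x, ‖x‖ ^ (σ * s) * |u x| ^ s) ≤ X ^ (s / p) * W ^ ((p - s) / p) := by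
    rw [e1]
    calc ∫ x in A, f x * g x
        ≤ (∫ x in A, f x ^ (p / s)) ^ (1 / (p / s)) *
          (∫ x in A, g x ^ (p / (p - s))) ^ (1 / (p / (p - s))) := holder
      _ = X ^ (s / p) * W ^ ((p - s) / p) := by
          rw [e2, e3, e4, one_div_div, one_div_div]
  have hI0 : 0 ≤ ∫ x, ‖x‖ ^ (σ * s) * |u x| ^ s := integral_nonneg (fun x =>
    mul_nonneg (Real.rpow_nonneg (norm_nonneg x) _) (Real.rpow_nonneg (abs_nonneg _) _))
  have step : (∫ x, ‖x‖ ^ (σ * s) * |u x| ^ s) ^ (1 / s) ≤ X ^ (1 / p) * W ^ κ := by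
    calc (∫ x, ‖x‖ ^ (σ * s) * |u x| ^ s) ^ (1 / s)
        ≤ (X ^ (s / p) * W ^ ((p - s) / p)) ^ (1 / s) :=
          Real.rpow_le_rpow hI0 key (by positivity)
      _ = X ^ (1 / p) * W ^ κ := by
          rw [Real.mul_rpow (Real.rpow_nonneg hX0 _) (Real.rpow_nonneg hW0 _),
            ← Real.rpow_mul hX0, ← Real.rpow_mul hW0]
          have h1 : s / p * (1 / s) = 1 / p := by field_simp
          have h2 : (p - s) / p * (1 / s) = κ := by
            rw [hκ, div_mul_div_comm, mul_one, div_sub_div _ _ hsne hpne, one_mul, mul_one,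
              mul_comm p s]
          rw [h1, h2]
  have hardy := hHardy u hu hcu
  calc (∫ x, ‖x‖ ^ (σ * s) * |u x| ^ s) ^ (1 / s)
      ≤ X ^ (1 / p) * W ^ κ := step
    _ ≤ C_H * Y ^ (1 / p) * W ^ κ :=
        mul_le_mul_of_nonneg_right hardy (Real.rpow_nonneg hW0 _)
    _ = C_H * W ^ κ * Y ^ (1 / p) := by ring
end

section
/- Let n ≥ 2 be an integer, let 1 ≤ p < n, q ≥ 1, a ∈ [0,1], and let r > 0 satisfy 1/r = a(1/p − 1/n) + (1−a)/q. Then there exists a constant C > 0 such that for every u ∈ C_c^∞(ℝⁿ), (∫_{ℝⁿ} |u(x)|^r dx)^{1/r} ≤ C (∫_{ℝⁿ} ‖∇u(x)‖^p dx)^{a/p} (∫_{ℝⁿ} |u(x)|^q dx)^{(1−a)/q}. -/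
open MeasureTheory ENNReal NNReal

theorem aux_lintegral {X F : Type*} [MeasurableSpace X] [TopologicalSpace X]
    [OpensMeasurableSpace X] [T2Space X] {μ : Measure X} [IsFiniteMeasureOnCompacts μ]
    [NormedAddCommGroup F] {f : X → F} (hf : Continuous f) (h2f : HasCompactSupport f)
    {t : ℝ} (ht : 0 < t) :
    (∫⁻ x, (‖f x‖₊ : ℝ≥0∞) ^ t ∂μ) ≠ ∞ ∧
      (∫ x, ‖f x‖ ^ t ∂μ) = (∫⁻ x, (‖f x‖₊ : ℝ≥0∞) ^ t ∂μ).toReal := by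
  have hg : Continuous fun x => ‖f x‖ ^ t :=
    Continuous.rpow_const hf.norm (fun x => Or.inr ht.le)
  have h2g : HasCompactSupport fun x => ‖f x‖ ^ t := by
    apply h2f.comp_left (g := fun y => ‖y‖ ^ t)
    simp [Real.zero_rpow ht.ne']
  have hint : Integrable (fun x => ‖f x‖ ^ t) μ := hg.integrable_of_hasCompactSupport h2g
  have hkey : ∀ x, ENNReal.ofReal (‖f x‖ ^ t) = (‖f x‖₊ : ℝ≥0∞) ^ t := by
    intro x
    rw [← ENNReal.ofReal_rpow_of_nonneg (norm_nonneg _) ht.le, ofReal_norm, enorm_eq_nnnorm]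
  constructor
  · have := hint.2
    rw [hasFiniteIntegral_iff_norm] at this
    refine ne_of_lt (lt_of_le_of_lt (le_of_eq ?_) this)
    refine lintegral_congr fun x => ?_
    rw [← hkey x, Real.norm_eq_abs, abs_of_nonneg (Real.rpow_nonneg (norm_nonneg _) t)]
  · rw [integral_eq_lintegral_of_nonneg_ae
      (Filter.Eventually.of_forall fun x => Real.rpow_nonneg (norm_nonneg _) t)
      hg.aestronglyMeasurable]
    congr 1
    exact lintegral_congr fun x => hkey x

/-- **Gagliardo–Nirenberg interpolation inequality**, the special case
`α = β = σ = γ = 0` of the Caffarelli–Kohn–Nirenberg inequality. -/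
theorem gagliardo_nirenberg (n : ℕ) (hn : 2 ≤ n) (p q a r : ℝ)
    (hp : 1 ≤ p) (hpn : p < n) (hq : 1 ≤ q) (ha0 : 0 ≤ a) (ha1 : a ≤ 1)
    (hr : 0 < r) (hbal : 1 / r = a * (1 / p - 1 / n) + (1 - a) / q) :
    ∃ C : ℝ, 0 < C ∧ ∀ u : EuclideanSpace ℝ (Fin n) → ℝ,
      ContDiff ℝ (⊤ : ℕ∞) u → HasCompactSupport u →
      (∫ x, |u x| ^ r) ^ (1 / r) ≤
        C * (∫ x, ‖fderiv ℝ u x‖ ^ p) ^ (a / p) * (∫ x, |u x| ^ q) ^ ((1 - a) / q) := by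
  have h0p : (0:ℝ) < p := lt_of_lt_of_le one_pos hp
  have h0q : (0:ℝ) < q := lt_of_lt_of_le one_pos hq
  have h0n : (0:ℝ) < n := lt_trans h0p hpn
  set s : ℝ := (1/p - 1/n)⁻¹ with hs_def
  have hs0 : (0:ℝ) < 1/p - 1/n := by
    have : 1/(n:ℝ) < 1/p := one_div_lt_one_div_of_lt h0p hpn
    linarith
  have hsp : 0 < s := inv_pos.mpr hs0
  -- NNReal versions
  set pN : ℝ≥0 := ⟨p, h0p.le⟩ with hpN
  set p' : ℝ≥0 := ⟨s, hsp.le⟩ with hp'N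
  have hpN1 : 1 ≤ pN := by rw [← NNReal.coe_le_coe]; exact hp
  have hp'0 : p' ≠ 0 := by
    simp only [← NNReal.coe_ne_zero]; exact hsp.ne'
  have hfr : 0 < Module.finrank ℝ (EuclideanSpace ℝ (Fin n)) := by
    simp [finrank_euclideanSpace]; omega
  have hp'eq : ((p' : ℝ))⁻¹ = (pN : ℝ)⁻¹ - (Module.finrank ℝ (EuclideanSpace ℝ (Fin n)) : ℝ)⁻¹ := by
    simp only [finrank_euclideanSpace, Fintype.card_fin]
    show s⁻¹ = p⁻¹ - (n:ℝ)⁻¹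
    rw [hs_def, inv_inv]; rw [one_div, one_div]
  set K : ℝ≥0 := SNormLESNormFDerivOfEqConst ℝ (volume : Measure (EuclideanSpace ℝ (Fin n))) pN
    with hK
  refine ⟨((K + 1 : ℝ≥0) ^ a : ℝ≥0), ?_, ?_⟩
  · have : (0:ℝ≥0) < (K+1) ^ a := NNReal.rpow_pos (by positivity)
    exact_mod_cast this
  intro u hu h2u
  have hu1 : ContDiff ℝ 1 u := hu.of_le (by simp)
  have hucont : Continuous u := hu.continuous
  have hdu : Continuous (fderiv ℝ u) := (contDiff_infty_iff_fderiv.mp (hu.of_le (by simp))).2.continuous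
  have h2du : HasCompactSupport (fderiv ℝ u) := h2u.fderiv (𝕜 := ℝ)
  -- lintegral quantities
  set Ar : ℝ≥0∞ := ∫⁻ x, (‖u x‖₊ : ℝ≥0∞) ^ r with hAr
  set As : ℝ≥0∞ := ∫⁻ x, (‖u x‖₊ : ℝ≥0∞) ^ s with hAs
  set Dq : ℝ≥0∞ := ∫⁻ x, (‖u x‖₊ : ℝ≥0∞) ^ q with hDq
  set Bp : ℝ≥0∞ := ∫⁻ x, (‖fderiv ℝ u x‖₊ : ℝ≥0∞) ^ p with hBp
  -- Sobolev inequality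
  have sobolev : As ^ (1/s) ≤ (K : ℝ≥0∞) * Bp ^ (1/p) := by
    have := eLpNorm_le_eLpNorm_fderiv_of_eq (F := ℝ)
      (volume : Measure (EuclideanSpace ℝ (Fin n))) hu1 h2u hpN1 hfr hp'eq
    rwa [eLpNorm_nnreal_eq_lintegral hp'0, eLpNorm_nnreal_eq_lintegral (by
      simp only [← NNReal.coe_ne_zero]; exact h0p.ne' : pN ≠ 0)] at this
  -- interpolation exponents
  set θ1 : ℝ := a * r / s with hθ1
  set θ2 : ℝ := (1 - a) * r / q with hθ2
  have hθ1nn : 0 ≤ θ1 := by positivity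
  have hθ2nn : 0 ≤ θ2 := by
    have : (0:ℝ) ≤ 1 - a := by linarith
    positivity
  have hdiv : a / s = a * (1 / p - 1 / n) := by
    rw [hs_def, div_eq_mul_inv, inv_inv]
  have hbal' : 1 / r = a / s + (1 - a) / q := by rw [hbal, ← hdiv]
  have hθsum : θ1 + θ2 = 1 := by
    have : θ1 + θ2 = r * (a / s + (1 - a) / q) := by
      rw [hθ1, hθ2]; field_simp
    rw [this, ← hbal']
    field_simp
  -- measurability
  have hmu : AEMeasurable (fun x => (‖u x‖₊ : ℝ≥0∞)) volume :=
    (ENNReal.continuous_coe.comp hucont.nnnorm).aemeasurable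
  -- interpolation
  have interp : Ar ≤ As ^ θ1 * Dq ^ θ2 := by
    have ptwise : ∀ x : EuclideanSpace ℝ (Fin n),
        (‖u x‖₊ : ℝ≥0∞) ^ r = ((‖u x‖₊ : ℝ≥0∞) ^ s) ^ θ1 * ((‖u x‖₊ : ℝ≥0∞) ^ q) ^ θ2 := by
      intro x
      rw [← ENNReal.rpow_mul, ← ENNReal.rpow_mul,
        ← ENNReal.rpow_add_of_nonneg _ _ (by positivity) (by positivity)]
      congr 1
      rw [hθ1, hθ2]
      field_simp
      ring
    calc Ar = ∫⁻ x, ((‖u x‖₊ : ℝ≥0∞) ^ s) ^ θ1 * ((‖u x‖₊ : ℝ≥0∞) ^ q) ^ θ2 :=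
          lintegral_congr ptwise
      _ ≤ As ^ θ1 * Dq ^ θ2 :=
          ENNReal.lintegral_mul_norm_pow_le (hmu.pow_const s) (hmu.pow_const q)
            hθ1nn hθ2nn hθsum
  -- main ennreal chain
  have main : Ar ^ (1/r) ≤ ((K : ℝ≥0∞) + 1) ^ a * Bp ^ (a/p) * Dq ^ ((1-a)/q) := by
    have step2 : Ar ^ (1/r) ≤ As ^ (a/s) * Dq ^ ((1-a)/q) := by
      have h := ENNReal.rpow_le_rpow interp (by positivity : (0:ℝ) ≤ 1/r)
      rwa [ENNReal.mul_rpow_of_nonneg _ _ (by positivity), ← ENNReal.rpow_mul,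
        ← ENNReal.rpow_mul,
        show θ1 * (1/r) = a / s by rw [hθ1]; field_simp,
        show θ2 * (1/r) = (1-a) / q by rw [hθ2]; field_simp] at h
    have step3 : As ^ (a/s) ≤ ((K : ℝ≥0∞) + 1) ^ a * Bp ^ (a/p) := by
      have h1 : As ^ (a/s) = (As ^ (1/s)) ^ a := by
        rw [← ENNReal.rpow_mul]; congr 1; field_simp
      have h2 : (As ^ (1/s)) ^ a ≤ ((K : ℝ≥0∞) * Bp ^ (1/p)) ^ a :=
        ENNReal.rpow_le_rpow sobolev ha0
      have h3 : ((K : ℝ≥0∞) * Bp ^ (1/p)) ^ a ≤ (((K : ℝ≥0∞) + 1) * Bp ^ (1/p)) ^ a := by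
        apply ENNReal.rpow_le_rpow _ ha0
        gcongr
        exact le_self_add
      rw [h1]
      refine (h2.trans h3).trans (le_of_eq ?_)
      rw [ENNReal.mul_rpow_of_nonneg _ _ ha0, ← ENNReal.rpow_mul]
      congr 1
      field_simp
    calc Ar ^ (1/r) ≤ As ^ (a/s) * Dq ^ ((1-a)/q) := step2
      _ ≤ ((K : ℝ≥0∞) + 1) ^ a * Bp ^ (a/p) * Dq ^ ((1-a)/q) := by gcongr
  -- finiteness and conversion to real integrals
  obtain ⟨hBfin, hBeq⟩ := aux_lintegral (μ := volume) hdu h2du h0p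
  obtain ⟨hDfin, hDeq⟩ := aux_lintegral (μ := volume) hucont h2u h0q
  obtain ⟨_, hAeq⟩ := aux_lintegral (μ := volume) hucont h2u hr
  have hRHSfin : ((K : ℝ≥0∞) + 1) ^ a * Bp ^ (a/p) * Dq ^ ((1-a)/q) ≠ ∞ := by
    apply ENNReal.mul_ne_top
    apply ENNReal.mul_ne_top
    · exact ENNReal.rpow_ne_top_of_nonneg ha0 (by simp)
    · exact ENNReal.rpow_ne_top_of_nonneg (by positivity) hBfin
    · exact ENNReal.rpow_ne_top_of_nonneg (div_nonneg (by linarith) h0q.le) hDfin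
  have := ENNReal.toReal_mono hRHSfin main
  simp only [Real.norm_eq_abs] at hAeq hDeq
  rw [hAeq, hDeq, hBeq]
  calc (Ar.toReal) ^ (1/r) = (Ar ^ (1/r)).toReal := ENNReal.toReal_rpow Ar (1/r)
    _ ≤ (((K : ℝ≥0∞) + 1) ^ a * Bp ^ (a/p) * Dq ^ ((1-a)/q)).toReal := this
    _ = ((K + 1 : ℝ≥0) ^ a : ℝ≥0) * (Bp ^ (a/p)).toReal * (Dq ^ ((1-a)/q)).toReal := by
        rw [ENNReal.toReal_mul, ENNReal.toReal_mul]
        congr 1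
        congr 1
        rw [← ENNReal.coe_one, ← ENNReal.coe_add, ← ENNReal.coe_rpow_of_nonneg _ ha0,
          ENNReal.coe_toReal]
    _ = ((K + 1 : ℝ≥0) ^ a : ℝ≥0) * Bp.toReal ^ (a/p) * Dq.toReal ^ ((1-a)/q) := by
        rw [← ENNReal.toReal_rpow, ← ENNReal.toReal_rpow]
end

section
/- Let n ≥ 3 be an integer. Then there exists a constant C > 0 such that for every u ∈ C_c^∞(ℝⁿ), (∫_{ℝⁿ} |u(x)|^2 dx)^{1/2} ≤ C (∫_{ℝⁿ} ‖∇u(x)‖^2 dx)^{n/(2(n+2))} (∫_{ℝⁿ} |u(x)| dx)^{2/(n+2)}. -/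
open MeasureTheory NNReal ENNReal Module

private lemma lint_rpow_ne_top {α : Type*} [MeasurableSpace α] [TopologicalSpace α]
    [OpensMeasurableSpace α] {μ : Measure α} [IsFiniteMeasureOnCompacts μ]
    {F : Type*} [NormedAddCommGroup F]
    {f : α → F} (hf : Continuous f) (h2f : HasCompactSupport f) {q : ℝ} (hq : 0 < q) :
    ∫⁻ x, (‖f x‖₊ : ℝ≥0∞) ^ q ∂μ ≠ ∞ := by
  have hmem : MemLp f (ENNReal.ofReal q) μ := hf.memLp_of_hasCompactSupport h2f
  have h := hmem.eLpNorm_lt_top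
  rw [eLpNorm_eq_lintegral_rpow_enorm_toReal (by simp [hq]) (by simp)] at h
  rw [ENNReal.toReal_ofReal hq.le] at h
  simp only [enorm_eq_nnnorm] at h
  intro hcon
  rw [hcon, ENNReal.top_rpow_of_pos (by positivity)] at h
  exact (lt_irrefl _ h)

/-- **Nash inequality**: for `n ≥ 3` there exists `C > 0` such that for every smooth
compactly supported `u`,
`(∫ |u|²)^(1/2) ≤ C (∫ ‖∇u‖²)^(n/(2(n+2))) (∫ |u|)^(2/(n+2))`. -/
theorem nash_inequality (n : ℕ) (hn : 3 ≤ n) :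
    ∃ C : ℝ, 0 < C ∧ ∀ u : EuclideanSpace ℝ (Fin n) → ℝ,
      ContDiff ℝ (⊤ : ℕ∞) u → HasCompactSupport u →
      (∫ x, |u x| ^ (2 : ℝ)) ^ ((1 : ℝ) / 2) ≤
        C * (∫ x, ‖fderiv ℝ u x‖ ^ (2 : ℝ)) ^ ((n : ℝ) / (2 * ((n : ℝ) + 2))) *
          (∫ x, |u x|) ^ ((2 : ℝ) / ((n : ℝ) + 2)) := by
  classical
  have hn3 : (3:ℝ) ≤ (n:ℝ) := by exact_mod_cast hn
  have hn2 : (0:ℝ) < (n:ℝ) - 2 := by linarith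
  have hnpos : (0:ℝ) < (n:ℝ) := by linarith
  set θ : ℝ := (n:ℝ) / ((n:ℝ) + 2) with hθ
  have hθpos : 0 < θ := by rw [hθ]; positivity
  set C₀ : ℝ≥0 := SNormLESNormFDerivOfEqConst ℝ
      (volume : Measure (EuclideanSpace ℝ (Fin n))) 2 + 1 with hC₀
  have hC₀pos : (0:ℝ) < (C₀:ℝ) := by rw [hC₀]; push_cast; positivity
  refine ⟨(C₀:ℝ) ^ θ, by positivity, ?_⟩
  intro u hu h2u
  have hu1 : ContDiff ℝ 1 u := hu.of_le (by simp)
  have hucont : Continuous u := hu.continuous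
  have hdu_cont : Continuous (fderiv ℝ u) := hu.continuous_fderiv (by simp)
  have hdu_supp : HasCompactSupport (fderiv ℝ u) := h2u.fderiv (𝕜 := ℝ)
  -- the Sobolev exponent
  have h2le : (2:ℝ≥0) ≤ (n:ℝ≥0) := by exact_mod_cast (by omega : 2 ≤ n)
  set p' : ℝ≥0 := 2 * (n:ℝ≥0) / ((n:ℝ≥0) - 2) with hp'def
  have hp'r : (p' : ℝ) = 2 * (n:ℝ) / ((n:ℝ) - 2) := by
    rw [hp'def]
    push_cast [NNReal.coe_sub h2le]
    ring
  have hp'pos : (0:ℝ) < (p':ℝ) := by rw [hp'r]; positivity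
  have hp'0 : p' ≠ 0 := by
    intro h; rw [h] at hp'pos; simp at hp'pos
  have hrank : 0 < finrank ℝ (EuclideanSpace ℝ (Fin n)) := by
    rw [finrank_euclideanSpace_fin]; omega
  have hp'inv : (p' : ℝ)⁻¹ = ((2:ℝ≥0):ℝ)⁻¹ - ((finrank ℝ (EuclideanSpace ℝ (Fin n)) : ℝ))⁻¹ := by
    have h1 : (n:ℝ) + 2 ≠ 0 := by positivity
    have h2 : (n:ℝ) - 2 ≠ 0 := ne_of_gt hn2
    rw [finrank_euclideanSpace_fin, hp'r]
    push_cast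
    field_simp
  have sob := eLpNorm_le_eLpNorm_fderiv_of_eq
      (μ := (volume : Measure (EuclideanSpace ℝ (Fin n)))) hu1 h2u
      (p := 2) (p' := p') one_le_two hrank hp'inv
  rw [eLpNorm_nnreal_eq_lintegral hp'0, eLpNorm_nnreal_eq_lintegral (two_ne_zero)] at sob
  set A := ∫⁻ x, (‖u x‖₊ : ℝ≥0∞) ^ (2:ℝ) with hA
  set B := ∫⁻ x, (‖fderiv ℝ u x‖₊ : ℝ≥0∞) ^ (2:ℝ) with hB
  set D := ∫⁻ x, (‖u x‖₊ : ℝ≥0∞) with hD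
  set P := ∫⁻ x, (‖u x‖₊ : ℝ≥0∞) ^ ((p':ℝ)) with hP
  have h2c : ((2:ℝ≥0):ℝ) = (2:ℝ) := by norm_num
  rw [h2c] at sob
  -- sob : P ^ (1/p') ≤ const * B ^ (1/2)
  have sob' : P ^ ((1:ℝ)/(p':ℝ)) ≤ (C₀ : ℝ≥0∞) * B ^ ((1:ℝ)/2) := by
    refine sob.trans (mul_le_mul_left ?_ _)
    rw [hC₀]
    exact_mod_cast le_self_add
  -- interpolation exponents
  set s : ℝ := ((n:ℝ) - 2) / ((n:ℝ) + 2) with hs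
  set t : ℝ := 4 / ((n:ℝ) + 2) with ht
  have hspos : 0 < s := by rw [hs]; positivity
  have htpos : 0 < t := by rw [ht]; positivity
  have hn20 : (n:ℝ) + 2 ≠ 0 := by positivity
  have hn2m : (n:ℝ) - 2 ≠ 0 := ne_of_gt hn2
  have hst : s + t = 1 := by rw [hs, ht]; field_simp; ring
  have hexp : (p':ℝ) * s + t = 2 := by
    rw [hp'r, hs, ht]; field_simp; ring
  have interp : A ≤ P ^ s * D ^ t := by
    have H := lintegral_mul_norm_pow_le (μ := (volume : Measure (EuclideanSpace ℝ (Fin n))))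
        (f := fun x => (‖u x‖₊ : ℝ≥0∞) ^ ((p':ℝ))) (g := fun x => (‖u x‖₊ : ℝ≥0∞))
        (by fun_prop) (by fun_prop) hspos.le htpos.le hst
    refine le_trans (le_of_eq ?_) H
    rw [hA]
    congr 1 with x
    rw [← ENNReal.rpow_mul, ← ENNReal.rpow_add_of_nonneg _ _ (by positivity) htpos.le, hexp]
  -- main ENNReal inequality
  have e1 : (n:ℝ) / (2 * ((n:ℝ) + 2)) = θ / 2 := by rw [hθ, div_div]; congr 1; ring
  have main : A ^ ((1:ℝ)/2) ≤
      (C₀ : ℝ≥0∞) ^ θ * B ^ ((n:ℝ) / (2 * ((n:ℝ) + 2))) * D ^ ((2:ℝ)/((n:ℝ)+2)) := by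
    have hθeq : (p':ℝ) * (s / 2) = θ := by
      rw [hp'r, hs, hθ]; field_simp
    calc A ^ ((1:ℝ)/2) ≤ (P ^ s * D ^ t) ^ ((1:ℝ)/2) :=
          ENNReal.rpow_le_rpow interp (by norm_num)
      _ = P ^ (s/2) * D ^ (t/2) := by
          rw [ENNReal.mul_rpow_of_nonneg _ _ (by norm_num), ← ENNReal.rpow_mul,
            ← ENNReal.rpow_mul, mul_one_div, mul_one_div]
      _ = (P ^ ((1:ℝ)/(p':ℝ))) ^ ((p':ℝ) * (s/2)) * D ^ (t/2) := by
          rw [← ENNReal.rpow_mul]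
          congr 2
          rw [hp'r]
          field_simp
      _ ≤ ((C₀ : ℝ≥0∞) * B ^ ((1:ℝ)/2)) ^ ((p':ℝ) * (s/2)) * D ^ (t/2) := by
          have hnn : (0:ℝ) ≤ (p':ℝ) * (s/2) := by positivity
          exact mul_le_mul_left (ENNReal.rpow_le_rpow sob' hnn) _
      _ = (C₀ : ℝ≥0∞) ^ θ * B ^ ((n:ℝ) / (2 * ((n:ℝ) + 2))) * D ^ ((2:ℝ)/((n:ℝ)+2)) := by
          rw [ENNReal.mul_rpow_of_nonneg _ _ (by positivity), ← ENNReal.rpow_mul, hθeq]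
          congr 2
          · rw [e1]; ring
          · rw [ht]; ring
  -- finiteness
  have hBfin : B ≠ ∞ := lint_rpow_ne_top hdu_cont hdu_supp (by norm_num)
  have hDfin : D ≠ ∞ := by
    have := lint_rpow_ne_top (μ := (volume : Measure (EuclideanSpace ℝ (Fin n))))
      hucont h2u (q := 1) one_pos
    simpa using this
  -- convert to real integrals
  have key : ∀ (f : EuclideanSpace ℝ (Fin n) → ℝ), Continuous f → (∀ x, 0 ≤ f x) →
      ∫ x, f x = (∫⁻ x, ENNReal.ofReal (f x)).toReal := fun f hf h =>
    integral_eq_lintegral_of_nonneg_ae (Filter.Eventually.of_forall h) hf.aestronglyMeasurable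
  have hAeq : ∫ x, |u x| ^ (2:ℝ) = A.toReal := by
    rw [key _ (hucont.abs.rpow_const (fun x => Or.inr (by norm_num)))
      (fun x => by positivity), hA]
    congr 1
    refine lintegral_congr fun x => ?_
    rw [← ENNReal.ofReal_rpow_of_nonneg (abs_nonneg _) (by norm_num : (0:ℝ) ≤ 2),
      ← Real.norm_eq_abs, ofReal_norm_eq_enorm, enorm_eq_nnnorm]
  have hBeq : ∫ x, ‖fderiv ℝ u x‖ ^ (2:ℝ) = B.toReal := by
    rw [key _ (hdu_cont.norm.rpow_const (fun x => Or.inr (by norm_num)))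
      (fun x => by positivity), hB]
    congr 1
    refine lintegral_congr fun x => ?_
    rw [← ENNReal.ofReal_rpow_of_nonneg (norm_nonneg _) (by norm_num : (0:ℝ) ≤ 2),
      ofReal_norm_eq_enorm, enorm_eq_nnnorm]
  have hDeq : ∫ x, |u x| = D.toReal := by
    rw [key _ hucont.abs (fun x => abs_nonneg _), hD]
    congr 1
    refine lintegral_congr fun x => ?_
    rw [← Real.norm_eq_abs, ofReal_norm_eq_enorm, enorm_eq_nnnorm]
  rw [hAeq, hBeq, hDeq, ENNReal.toReal_rpow, ENNReal.toReal_rpow, ENNReal.toReal_rpow]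
  have hcoe : (C₀:ℝ) ^ θ = ((C₀ : ℝ≥0∞) ^ θ).toReal := by
    rw [← ENNReal.toReal_rpow]
    simp
  rw [hcoe, ← ENNReal.toReal_mul, ← ENNReal.toReal_mul]
  refine ENNReal.toReal_mono ?_ main
  exact ENNReal.mul_ne_top
    (ENNReal.mul_ne_top (ENNReal.rpow_ne_top_of_nonneg hθpos.le ENNReal.coe_ne_top)
      (ENNReal.rpow_ne_top_of_nonneg (by positivity) hBfin))
    (ENNReal.rpow_ne_top_of_nonneg (by positivity) hDfin)
end

section
/- Let n ≥ 2 be an integer and let 1 ≤ p < n. Then there exists a constant C > 0 such that for every u ∈ C_c^∞(ℝⁿ), ∫_{ℝⁿ} |u(x)|^p / ‖x‖^p dx ≤ C^p ∫_{ℝⁿ} ‖∇u(x)‖^p dx. -/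
open MeasureTheory Set Filter
open scoped ENNReal

/-- Weighted Hölder-type estimate on `(1, ∞)`: for `1 ≤ p` and `γ > (p-1)/p`, there is a
finite constant `K` with `(∫⁻ φ)^p ≤ K * ∫⁻ φ^p * s^(γp)`. -/
lemma hardy_holder_aux {p γ : ℝ} (hp : 1 ≤ p) (hγq : (p - 1) / p < γ) :
    ∃ K : ℝ≥0∞, K ≠ ⊤ ∧ ∀ φ : ℝ → ℝ≥0∞,
      AEMeasurable φ (volume.restrict (Ioi (1:ℝ))) →
      (∫⁻ s in Ioi (1:ℝ), φ s) ^ p ≤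
        K * ∫⁻ s in Ioi (1:ℝ), φ s ^ p * ENNReal.ofReal (s ^ (γ * p)) := by
  have hp0 : (0:ℝ) < p := lt_of_lt_of_le one_pos hp
  have hγ0 : 0 < γ := lt_of_le_of_lt (div_nonneg (by linarith) hp0.le) hγq
  rcases eq_or_lt_of_le hp with hp1 | hp1
  · -- p = 1
    refine ⟨1, ENNReal.one_ne_top, fun φ hφ => ?_⟩
    rw [← hp1, one_mul, ENNReal.rpow_one]
    refine lintegral_mono_ae (((ae_restrict_mem measurableSet_Ioi)).mono fun s hs => ?_)
    have h1s : (1:ℝ) ≤ s := le_of_lt hs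
    have h1 : (1:ℝ≥0∞) ≤ ENNReal.ofReal (s ^ (γ * 1)) := by
      rw [ENNReal.one_le_ofReal]
      calc (1:ℝ) = 1 ^ (γ * 1) := (Real.one_rpow _).symm
        _ ≤ s ^ (γ * 1) := Real.rpow_le_rpow zero_le_one h1s (by positivity)
    calc φ s = φ s ^ (1:ℝ) * 1 := by rw [ENNReal.rpow_one, mul_one]
      _ ≤ φ s ^ (1:ℝ) * ENNReal.ofReal (s ^ (γ * 1)) := mul_le_mul_right h1 _
  · -- 1 < p
    set q := p.conjExponent with hq_def
    have hpq : p.HolderConjugate q := Real.HolderConjugate.conjExponent hp1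
    have hq_eq : q = p / (p - 1) := hpq.conjugate_eq
    have hq0 : 0 < q := hpq.symm.pos
    have hγq1 : 1 < γ * q := by
      rw [div_lt_iff₀ hp0] at hγq
      rw [hq_eq, ← mul_div_assoc, lt_div_iff₀ (by linarith : (0:ℝ) < p - 1)]
      nlinarith
    have hexp : -(γ * q) < -1 := by linarith
    have hD_int : IntegrableOn (fun s : ℝ => s ^ (-(γ * q))) (Ioi 1) :=
      integrableOn_Ioi_rpow_of_lt hexp one_pos
    set D : ℝ≥0∞ := ∫⁻ s in Ioi (1:ℝ), ENNReal.ofReal (s ^ (-(γ * q))) with hD_def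
    have hD_ne : D ≠ ⊤ := by
      rw [hD_def, ← ofReal_integral_eq_lintegral_ofReal hD_int
        (((ae_restrict_mem measurableSet_Ioi)).mono fun s hs =>
          Real.rpow_nonneg (le_of_lt (lt_trans one_pos hs)) _)]
      exact ENNReal.ofReal_ne_top
    refine ⟨D ^ (p / q), ENNReal.rpow_ne_top_of_nonneg (by positivity) hD_ne, fun φ hφ => ?_⟩
    have hmeas_s : Measurable fun s : ℝ => ENNReal.ofReal (s ^ γ) :=
      (measurable_id.pow_const γ).ennreal_ofReal
    have hmeas_g : Measurable fun s : ℝ => ENNReal.ofReal (s ^ (-γ)) :=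
      (measurable_id.pow_const (-γ)).ennreal_ofReal
    have key := ENNReal.lintegral_mul_le_Lp_mul_Lq (volume.restrict (Ioi (1:ℝ))) hpq
      (f := fun s => φ s * ENNReal.ofReal (s ^ γ))
      (hφ.mul hmeas_s.aemeasurable) hmeas_g.aemeasurable
    have h1 : ∫⁻ s in Ioi (1:ℝ),
        ((fun s => φ s * ENNReal.ofReal (s ^ γ)) * fun s => ENNReal.ofReal (s ^ (-γ))) s
        = ∫⁻ s in Ioi (1:ℝ), φ s := by
      refine lintegral_congr_ae (((ae_restrict_mem measurableSet_Ioi)).mono fun s hs => ?_)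
      have hs0 : (0:ℝ) < s := lt_trans one_pos hs
      simp only [Pi.mul_apply]
      rw [mul_assoc, ← ENNReal.ofReal_mul (Real.rpow_nonneg hs0.le _),
        ← Real.rpow_add hs0, add_neg_cancel, Real.rpow_zero, ENNReal.ofReal_one, mul_one]
    have h2 : ∫⁻ s in Ioi (1:ℝ), (φ s * ENNReal.ofReal (s ^ γ)) ^ p
        = ∫⁻ s in Ioi (1:ℝ), φ s ^ p * ENNReal.ofReal (s ^ (γ * p)) := by
      refine lintegral_congr_ae (((ae_restrict_mem measurableSet_Ioi)).mono fun s hs => ?_)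
      have hs0 : (0:ℝ) < s := lt_trans one_pos hs
      dsimp only
      rw [ENNReal.mul_rpow_of_nonneg _ _ hp0.le,
        ENNReal.ofReal_rpow_of_nonneg (Real.rpow_nonneg hs0.le _) hp0.le,
        ← Real.rpow_mul hs0.le]
    have h3 : ∫⁻ s in Ioi (1:ℝ), (ENNReal.ofReal (s ^ (-γ))) ^ q = D := by
      rw [hD_def]
      refine lintegral_congr_ae (((ae_restrict_mem measurableSet_Ioi)).mono fun s hs => ?_)
      have hs0 : (0:ℝ) < s := lt_trans one_pos hs
      dsimp only
      rw [ENNReal.ofReal_rpow_of_nonneg (Real.rpow_nonneg hs0.le _) hq0.le,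
        ← Real.rpow_mul hs0.le, neg_mul]
    rw [h1, h2, h3] at key
    calc (∫⁻ s in Ioi (1:ℝ), φ s) ^ p
        ≤ ((∫⁻ s in Ioi (1:ℝ), φ s ^ p * ENNReal.ofReal (s ^ (γ * p))) ^ (1/p)
            * D ^ (1/q)) ^ p := ENNReal.rpow_le_rpow key hp0.le
      _ = (∫⁻ s in Ioi (1:ℝ), φ s ^ p * ENNReal.ofReal (s ^ (γ * p))) * D ^ (p / q) := by
          rw [ENNReal.mul_rpow_of_nonneg _ _ hp0.le, ← ENNReal.rpow_mul, ← ENNReal.rpow_mul,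
            one_div_mul_cancel hp0.ne', ENNReal.rpow_one, one_div, inv_mul_eq_div]
      _ = D ^ (p / q) * ∫⁻ s in Ioi (1:ℝ), φ s ^ p * ENNReal.ofReal (s ^ (γ * p)) :=
          mul_comm _ _

/-- **Classical (unweighted) Hardy inequality**: for `1 ≤ p < n` there exists `C > 0`
such that for every smooth compactly supported `u`,
`∫ |u(x)|^p / ‖x‖^p dx ≤ C^p ∫ ‖∇u(x)‖^p dx`. -/
theorem classical_hardy_inequality (n : ℕ) (hn : 2 ≤ n) (p : ℝ)
    (hp : 1 ≤ p) (hpn : p < n) :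
    ∃ C : ℝ, 0 < C ∧ ∀ u : EuclideanSpace ℝ (Fin n) → ℝ,
      ContDiff ℝ (⊤ : ℕ∞) u → HasCompactSupport u →
      (∫ x, |u x| ^ p / ‖x‖ ^ p) ≤ C ^ p * ∫ x, ‖fderiv ℝ u x‖ ^ p := by
  have hp0 : (0:ℝ) < p := lt_of_lt_of_le one_pos hp
  have hn2 : (2:ℝ) ≤ n := by exact_mod_cast hn
  set γ : ℝ := (n + p - 2) / (2 * p) with hγ_def
  have hγq : (p - 1) / p < γ := by
    rw [hγ_def, div_lt_div_iff₀ hp0 (by positivity)]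
    nlinarith
  have hγ0 : 0 < γ := lt_of_le_of_lt (div_nonneg (by linarith) hp0.le) hγq
  have hexp : γ * p - n < -1 := by
    have hγp : γ * p = (n + p - 2) / 2 := by
      rw [hγ_def]; field_simp
    rw [hγp]; linarith
  obtain ⟨K, hK_ne, hK⟩ := hardy_holder_aux hp hγq
  have hB_int : IntegrableOn (fun s : ℝ => s ^ (γ * p - n)) (Ioi 1) :=
    integrableOn_Ioi_rpow_of_lt hexp one_pos
  set B : ℝ≥0∞ := ∫⁻ s in Ioi (1:ℝ), ENNReal.ofReal (s ^ (γ * p - n)) with hB_def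
  have hB_ne : B ≠ ⊤ := by
    rw [hB_def, ← ofReal_integral_eq_lintegral_ofReal hB_int
      (((ae_restrict_mem measurableSet_Ioi)).mono fun s hs =>
        Real.rpow_nonneg (le_of_lt (lt_trans one_pos hs)) _)]
    exact ENNReal.ofReal_ne_top
  have hKB_ne : K * B ≠ ⊤ := ENNReal.mul_ne_top hK_ne hB_ne
  set Cp : ℝ := max 1 (K * B).toReal with hCp_def
  have hCp_pos : 0 < Cp := lt_of_lt_of_le one_pos (le_max_left _ _)
  refine ⟨Cp ^ (1/p), Real.rpow_pos_of_pos hCp_pos _, fun u hu hsupp => ?_⟩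
  have hCpp : (Cp ^ (1/p)) ^ p = Cp := by
    rw [← Real.rpow_mul hCp_pos.le, one_div_mul_cancel hp0.ne', Real.rpow_one]
  have hu_cont : Continuous u := hu.continuous
  set g := fderiv ℝ u with hg_def
  have hg_cont : Continuous g := hu.continuous_fderiv (by simp)
  have hg_supp : HasCompactSupport g := hsupp.fderiv ℝ
  obtain ⟨Ru, hRu_pos, hRu⟩ := hsupp.exists_pos_le_norm
  obtain ⟨Rg, hRg_pos, hRg⟩ := hg_supp.exists_pos_le_norm
  set G : EuclideanSpace ℝ (Fin n) → ℝ≥0∞ := fun y => (‖g y‖₊ : ℝ≥0∞) with hG_def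
  have hG_cont : Continuous G := ENNReal.continuous_coe.comp (continuous_nnnorm.comp hg_cont)
  -- integrability of the right-hand side
  have hgp_cont : Continuous fun x => ‖g x‖ ^ p := hg_cont.norm.rpow_const fun x => Or.inr hp0.le
  have hgp_supp : HasCompactSupport fun x => ‖g x‖ ^ p := by
    have := hg_supp.comp_left (g := fun L : EuclideanSpace ℝ (Fin n) →L[ℝ] ℝ => ‖L‖ ^ p)
      (by simp [Real.zero_rpow hp0.ne'])
    exact this
  have hgp_int : Integrable (fun x => ‖g x‖ ^ p) :=
    hgp_cont.integrable_of_hasCompactSupport hgp_supp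
  set I : ℝ≥0∞ := ∫⁻ x, G x ^ p with hI_def
  have hI_eq : ENNReal.ofReal (∫ x, ‖g x‖ ^ p) = I := by
    rw [ofReal_integral_eq_lintegral_ofReal hgp_int
      (Eventually.of_forall fun x => Real.rpow_nonneg (norm_nonneg _) _), hI_def]
    refine lintegral_congr fun x => ?_
    rw [← ENNReal.ofReal_rpow_of_nonneg (norm_nonneg _) hp0.le, (ofReal_norm (g x)).trans (enorm_eq_nnnorm _)]
  have hI_ne : I ≠ ⊤ := hI_eq ▸ ENNReal.ofReal_ne_top
  -- pointwise estimate along rays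
  have hpoint : ∀ x : EuclideanSpace ℝ (Fin n), x ≠ 0 →
      ENNReal.ofReal (|u x| ^ p / ‖x‖ ^ p) ≤ (∫⁻ s in Ioi (1:ℝ), G (s • x)) ^ p := by
    intro x hx
    have hx0 : 0 < ‖x‖ := norm_pos_iff.mpr hx
    have hderiv : ∀ t : ℝ, HasDerivAt (fun t : ℝ => u (t • x)) (g (t • x) x) t := by
      intro t
      have h1 : HasFDerivAt u (g (t • x)) (t • x) :=
        (hu.differentiable (by simp) (t • x)).hasFDerivAt
      have h2 : HasDerivAt (fun t : ℝ => t • x) x t := by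
        simpa using (hasDerivAt_id t).smul_const x
      exact h1.comp_hasDerivAt t h2
    have hcont_ray : Continuous fun t : ℝ => g (t • x) :=
      hg_cont.comp (continuous_id.smul continuous_const)
    have hsupp_ray : HasCompactSupport fun t : ℝ => g (t • x) := by
      refine HasCompactSupport.intro (isCompact_Icc (a := -(Rg / ‖x‖)) (b := Rg / ‖x‖))
        fun t ht => ?_
      apply hRg
      rw [norm_smul, Real.norm_eq_abs]
      rw [mem_Icc, not_and_or] at ht
      have habs : Rg / ‖x‖ ≤ |t| := by
        rcases ht with h | h
        · push_neg at h
          exact le_abs.mpr (Or.inr (by linarith))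
        · push_neg at h
          exact le_abs.mpr (Or.inl h.le)
      calc Rg = Rg / ‖x‖ * ‖x‖ := by field_simp
        _ ≤ |t| * ‖x‖ := mul_le_mul_of_nonneg_right habs hx0.le
    have hint1 : IntegrableOn (fun t : ℝ => g (t • x) x) (Ioi 1) := by
      refine Integrable.integrableOn ?_
      refine (hcont_ray.clm_apply continuous_const).integrable_of_hasCompactSupport ?_
      exact hsupp_ray.comp_left (g := fun L : EuclideanSpace ℝ (Fin n) →L[ℝ] ℝ => L x)
        (by simp)
    have hint2 : IntegrableOn (fun t : ℝ => ‖g (t • x)‖) (Ioi 1) :=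
      (hcont_ray.norm.integrable_of_hasCompactSupport hsupp_ray.norm).integrableOn
    have htend : Tendsto (fun t : ℝ => u (t • x)) atTop (nhds 0) := by
      refine Filter.EventuallyEq.tendsto ?_
      filter_upwards [Filter.eventually_ge_atTop (Ru / ‖x‖)] with t ht
      apply hRu
      rw [norm_smul, Real.norm_eq_abs]
      have habs : Ru / ‖x‖ ≤ |t| := le_trans ht (le_abs_self t)
      calc Ru = Ru / ‖x‖ * ‖x‖ := by field_simp
        _ ≤ |t| * ‖x‖ := mul_le_mul_of_nonneg_right habs hx0.le
    have hFTC := integral_Ioi_of_hasDerivAt_of_tendsto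
      (f := fun t : ℝ => u (t • x)) (f' := fun t => g (t • x) x) (a := 1) (m := 0)
      ((hu_cont.comp (continuous_id.smul continuous_const)).continuousWithinAt)
      (fun t _ => hderiv t) hint1 htend
    have hnn : 0 ≤ ∫ t in Ioi (1:ℝ), ‖g (t • x)‖ :=
      setIntegral_nonneg measurableSet_Ioi fun t _ => norm_nonneg _
    have hux : |u x| ≤ (∫ t in Ioi (1:ℝ), ‖g (t • x)‖) * ‖x‖ := by
      have h1 : |u x| = ‖∫ t in Ioi (1:ℝ), g (t • x) x‖ := by
        rw [hFTC]
        simp [Real.norm_eq_abs]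
      rw [h1]
      calc ‖∫ t in Ioi (1:ℝ), g (t • x) x‖ ≤ ∫ t in Ioi (1:ℝ), ‖g (t • x) x‖ :=
            norm_integral_le_integral_norm _
        _ ≤ ∫ t in Ioi (1:ℝ), ‖g (t • x)‖ * ‖x‖ := by
            refine setIntegral_mono_on hint1.norm (hint2.mul_const _) measurableSet_Ioi
              fun t _ => (g (t • x)).le_opNorm x
        _ = (∫ t in Ioi (1:ℝ), ‖g (t • x)‖) * ‖x‖ := integral_mul_const _ _
    have h2 : |u x| ^ p / ‖x‖ ^ p ≤ (∫ t in Ioi (1:ℝ), ‖g (t • x)‖) ^ p := by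
      rw [div_le_iff₀ (Real.rpow_pos_of_pos hx0 p)]
      calc |u x| ^ p ≤ ((∫ t in Ioi (1:ℝ), ‖g (t • x)‖) * ‖x‖) ^ p :=
            Real.rpow_le_rpow (abs_nonneg _) hux hp0.le
        _ = (∫ t in Ioi (1:ℝ), ‖g (t • x)‖) ^ p * ‖x‖ ^ p :=
            Real.mul_rpow hnn (norm_nonneg _)
    calc ENNReal.ofReal (|u x| ^ p / ‖x‖ ^ p)
        ≤ ENNReal.ofReal ((∫ t in Ioi (1:ℝ), ‖g (t • x)‖) ^ p) := ENNReal.ofReal_le_ofReal h2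
      _ = (ENNReal.ofReal (∫ t in Ioi (1:ℝ), ‖g (t • x)‖)) ^ p :=
          (ENNReal.ofReal_rpow_of_nonneg hnn hp0.le).symm
      _ = (∫⁻ s in Ioi (1:ℝ), G (s • x)) ^ p := by
          rw [ofReal_integral_eq_lintegral_ofReal hint2
            (((ae_restrict_mem measurableSet_Ioi)).mono fun s _ => norm_nonneg _)]
          congr 1
          exact lintegral_congr fun s => ofReal_norm _
  -- main chain
  set A : ℝ≥0∞ := ∫⁻ x, ENNReal.ofReal (|u x| ^ p / ‖x‖ ^ p) with hA_def
  haveI : Nonempty (Fin n) := ⟨⟨0, by omega⟩⟩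
  haveI : NullSingletonClass (volume : Measure (EuclideanSpace ℝ (Fin n))) := inferInstance
  have hae0 : ∀ᵐ x : EuclideanSpace ℝ (Fin n), x ≠ 0 := by
    rw [ae_iff]
    simpa using measure_singleton (0 : EuclideanSpace ℝ (Fin n))
  have hA_le : A ≤ K * ∫⁻ x, ∫⁻ s in Ioi (1:ℝ), G (s • x) ^ p * ENNReal.ofReal (s ^ (γ * p)) := by
    rw [← lintegral_const_mul' _ _ hK_ne]
    refine lintegral_mono_ae (hae0.mono fun x hx => ?_)
    refine le_trans (hpoint x hx) (hK _ ?_)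
    exact (hG_cont.comp (continuous_id.smul continuous_const)).measurable.aemeasurable
  have hmeas_prod : AEMeasurable (Function.uncurry fun (x : EuclideanSpace ℝ (Fin n)) (s : ℝ) =>
      G (s • x) ^ p * ENNReal.ofReal (s ^ (γ * p)))
      (volume.prod (volume.restrict (Ioi (1:ℝ)))) := by
    refine AEMeasurable.mul ?_ ?_
    · exact ((hG_cont.comp (continuous_snd.smul continuous_fst)).measurable.pow_const p).aemeasurable
    · exact ((measurable_id.pow_const (γ * p)).ennreal_ofReal.comp measurable_snd).aemeasurable
  have hswap : (∫⁻ x, ∫⁻ s in Ioi (1:ℝ), G (s • x) ^ p * ENNReal.ofReal (s ^ (γ * p)))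
      = ∫⁻ s in Ioi (1:ℝ), ∫⁻ x, G (s • x) ^ p * ENNReal.ofReal (s ^ (γ * p)) :=
    lintegral_lintegral_swap hmeas_prod
  have hscale : ∀ s ∈ Ioi (1:ℝ),
      (∫⁻ x, G (s • x) ^ p * ENNReal.ofReal (s ^ (γ * p)))
        = ENNReal.ofReal (s ^ (γ * p - n)) * I := by
    intro s hs
    have hs0 : (0:ℝ) < s := lt_trans one_pos hs
    have hmap := Measure.map_addHaar_smul (volume : Measure (EuclideanSpace ℝ (Fin n)))
      (r := s) hs0.ne'
    rw [finrank_euclideanSpace_fin] at hmap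
    have hGp_meas : Measurable fun y : EuclideanSpace ℝ (Fin n) => G y ^ p :=
      hG_cont.measurable.pow_const p
    have h1 : (∫⁻ x, G (s • x) ^ p) = ENNReal.ofReal |((s:ℝ) ^ n)⁻¹| * I := by
      rw [hI_def, ← lintegral_map hGp_meas (measurable_const_smul s), hmap,
        lintegral_smul_measure, smul_eq_mul]
    calc (∫⁻ x, G (s • x) ^ p * ENNReal.ofReal (s ^ (γ * p)))
        = (∫⁻ x, G (s • x) ^ p) * ENNReal.ofReal (s ^ (γ * p)) :=
          lintegral_mul_const' _ _ ENNReal.ofReal_ne_top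
      _ = ENNReal.ofReal (s ^ (γ * p - n)) * I := by
          rw [h1]
          rw [show ENNReal.ofReal |((s:ℝ) ^ n)⁻¹| * I * ENNReal.ofReal (s ^ (γ * p))
            = ENNReal.ofReal (s ^ (γ * p)) * ENNReal.ofReal |((s:ℝ) ^ n)⁻¹| * I by ring]
          congr 2
          rw [← ENNReal.ofReal_mul (Real.rpow_nonneg hs0.le _)]
          congr 1
          rw [abs_of_nonneg (by positivity), ← Real.rpow_natCast s n, ← Real.rpow_neg hs0.le,
            ← Real.rpow_add hs0]
          ring_nf
  have htotal : A ≤ K * B * I := by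
    refine le_trans hA_le ?_
    rw [hswap, setLIntegral_congr_fun measurableSet_Ioi hscale,
      lintegral_mul_const' _ _ hI_ne, hB_def, mul_assoc]
  have hA_final : A ≤ ENNReal.ofReal Cp * I := by
    refine le_trans htotal (mul_le_mul_left ?_ I)
    rw [← ENNReal.ofReal_toReal hKB_ne]
    exact ENNReal.ofReal_le_ofReal (le_max_right _ _)
  -- convert to Bochner integrals
  have hLHS : (∫ x, |u x| ^ p / ‖x‖ ^ p) = A.toReal := by
    rw [hA_def]
    refine integral_eq_lintegral_of_nonneg_ae
      (Eventually.of_forall fun x => div_nonneg (Real.rpow_nonneg (abs_nonneg _) _)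
        (Real.rpow_nonneg (norm_nonneg _) _)) ?_
    exact ((hu_cont.measurable.abs.pow_const p).div
      (measurable_norm.pow_const p)).aestronglyMeasurable
  have hRHS : (∫ x, ‖g x‖ ^ p) = I.toReal := by
    rw [← hI_eq, ENNReal.toReal_ofReal
      (integral_nonneg fun x => Real.rpow_nonneg (norm_nonneg _) _)]
  rw [hLHS, hRHS, hCpp]
  calc A.toReal ≤ (ENNReal.ofReal Cp * I).toReal :=
        ENNReal.toReal_mono (ENNReal.mul_ne_top ENNReal.ofReal_ne_top hI_ne) hA_final
    _ = Cp * I.toReal := by rw [ENNReal.toReal_mul, ENNReal.toReal_ofReal hCp_pos.le]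
end
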